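/- Let N ≥ 1, a_1, a_2, a_3 ∈ ℝ^N, ε > 0, and suppose φ : Σ_3 → ℝ^N satisfies ‖φ(η) − a_{η_0}‖ ≤ ε for every η ∈ Σ_3. Let w : ℕ → {1,2,3} be the concatenation B_1 B_2 B_3 … of the blocks B_k, and let ξ ∈ Σ_3 be any admissible sequence with ξ_j = w_j for all j ≥ 0. Then limsup_{k→∞} ‖A_{n_k}(ξ) − (a_1/2 + a_2/3 + a_3/6)‖ ≤ ε and limsup_{k→∞} ‖A_{n̂_k}(ξ) − (a_1/2 + a_2/6 + a_3/3)‖ ≤ ε, where A_n(ξ) = (1/n) Σ_{i=0}^{n−1} φ(σ^i ξ). Consequently every limit point b of the sequence (A_{n_k}(ξ))_k satisfies ‖b − (a_1/2 + a_2/3 + a_3/6)‖ ≤ ε and every limit point b̂ of (A_{n̂_k}(ξ))_k satisfies ‖b̂ − (a_1/2 + a_2/6 + a_3/3)‖ ≤ ε. -/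

import Mathlib

open Filter Topology

/-- The symbol space `Σ_s`: bi-infinite admissible sequences over an alphabet with
`s` symbols (represented by `Fin s`), i.e. `ξ_i ≠ ξ_{i+1}` for all `i ∈ ℤ`. -/
def SymbSpace (s : ℕ) : Type := {ξ : ℤ → Fin s // ∀ i : ℤ, ξ i ≠ ξ (i + 1)}

/-- The (left) shift map `σ : Σ_s → Σ_s`, `(σξ)_i = ξ_{i+1}`. -/
def shift {s : ℕ} (ξ : SymbSpace s) : SymbSpace s :=
  ⟨fun i => ξ.1 (i + 1), fun i => ξ.2 (i + 1)⟩

/-- Birkhoff average `A_n(ξ) = (1/n) ∑_{i=0}^{n-1} φ(σ^i ξ)`. -/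
noncomputable def birk {s N : ℕ} (φ : SymbSpace s → EuclideanSpace ℝ (Fin N))
    (n : ℕ) (ξ : SymbSpace s) : EuclideanSpace ℝ (Fin N) :=
  (n : ℝ)⁻¹ • ∑ i ∈ Finset.range n, φ (shift^[i] ξ)

/- The symbols `1, 2, 3` of the paper are represented by `0, 1, 2 : Fin 3`. -/

/-- The `i`-th letter of the block `B_k`: the alternating word `1,2,1,2,…,1,2` of length
`2^{2k}` followed by the alternating word `1,3,1,3,…,1,3` of length `2^{2k+1}`. -/
def blockB (k i : ℕ) : Fin 3 :=
  if i < 2 ^ (2 * k) then (if i % 2 = 0 then 0 else 1)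
  else (if (i - 2 ^ (2 * k)) % 2 = 0 then 0 else 2)

/-- `m_k = 2^{2k} + 2^{2k+1}`, the length of the block `B_k`. -/
def mlen (k : ℕ) : ℕ := 2 ^ (2 * k) + 2 ^ (2 * k + 1)

/-- The `j`-th letter of the infinite concatenation `B_k B_{k+1} B_{k+2} ⋯`. -/
def wAux (k j : ℕ) : Fin 3 :=
  if h : j < mlen k then blockB k j
  else wAux (k + 1) (j - mlen k)
  termination_by j
  decreasing_by
    have h1 : 0 < mlen k := by unfold mlen; positivity
    omega

/-- The infinite concatenation `w = B_1 B_2 B_3 ⋯`. -/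
def w (j : ℕ) : Fin 3 := wAux 1 j

/-- `m_1 + m_2 + ⋯ + m_k`. -/
def msum (k : ℕ) : ℕ := ∑ i ∈ Finset.range k, mlen (i + 1)

/-- `n_k = m_1 + ⋯ + m_{k-1} + 2^{2k}`. -/
def nseq (k : ℕ) : ℕ := msum (k - 1) + 2 ^ (2 * k)

/-- `n̂_k = m_1 + ⋯ + m_k`. -/
def hatn (k : ℕ) : ℕ := msum k

/-! Since `(σ^i ξ)_0 = w_i`, every Birkhoff average `A_n(ξ)` is `ε`-close to the average of
`a` along the first `n` letters of `w`. Each block `B_k` contains the symbols `1, 2, 3` with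
frequencies `1/2, 1/6, 1/3`, so this average is exactly `a_1/2 + a_2/6 + a_3/3` at `n̂_k`. At `n_k`
the word read so far ends with the first half of `B_k`, where `1, 2` each have frequency `1/2`;
as that half has length `m_1 + ⋯ + m_{k-1} + 4`, the average is `a_1/2 + a_2/3 + a_3/6` up to
`2 (a_2 - a_3) / (3 n_k)`. -/

lemma shift_iterate_apply {s : ℕ} (ξ : SymbSpace s) (i : ℕ) (j : ℤ) :
    (shift^[i] ξ).1 j = ξ.1 (j + i) := by
  induction i generalizing ξ with
  | zero => simp
  | succ n ih =>
    rw [Function.iterate_succ_apply, ih]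
    simp only [shift, Nat.cast_succ, add_assoc]

lemma norm_birk_sub_average_le {s N : ℕ} {a : Fin s → EuclideanSpace ℝ (Fin N)} {ε : ℝ}
    {φ : SymbSpace s → EuclideanSpace ℝ (Fin N)} (hφ : ∀ η, ‖φ η - a (η.1 0)‖ ≤ ε)
    {ξ : SymbSpace s} {x : ℕ → Fin s} (hξ : ∀ j : ℕ, ξ.1 j = x j) (n : ℕ) :
    ‖birk φ n ξ - (n : ℝ)⁻¹ • ∑ i ∈ Finset.range n, a (x i)‖ ≤ ε := by
  have hterm : ∀ i ∈ Finset.range n, ‖φ (shift^[i] ξ) - a (x i)‖ ≤ ε := fun i _ => by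
    simpa [shift_iterate_apply, hξ] using hφ (shift^[i] ξ)
  have hε : 0 ≤ ε := (norm_nonneg _).trans (hφ ξ)
  rw [birk, ← smul_sub, ← Finset.sum_sub_distrib, norm_smul, norm_inv, Real.norm_natCast]
  calc (n : ℝ)⁻¹ * ‖∑ i ∈ Finset.range n, (φ (shift^[i] ξ) - a (x i))‖
      ≤ (n : ℝ)⁻¹ * (n * ε) := by
        gcongr
        simpa using norm_sum_le_of_le _ hterm
    _ ≤ ε := by
        rw [← mul_assoc]
        exact mul_le_of_le_one_left hε (inv_mul_le_one_of_le₀ le_rfl (Nat.cast_nonneg n))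

lemma sum_range_two_mul_ite_even {M : Type*} [AddCommMonoid M] (x y : M) (m : ℕ) :
    ∑ i ∈ Finset.range (2 * m), (if i % 2 = 0 then x else y) = m • (x + y) := by
  induction m with
  | zero => simp
  | succ n ih =>
    rw [Nat.mul_succ, Finset.sum_range_succ, Finset.sum_range_succ, ih,
      if_pos (by omega), if_neg (by omega), succ_nsmul, add_assoc]

section Blocks

variable {M : Type*} [AddCommMonoid M] (f : Fin 3 → M) (k : ℕ)

lemma sum_blockB_first_half :
    ∑ j ∈ Finset.range (2 ^ (2 * (k + 1))), f (blockB (k + 1) j) =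
      2 ^ (2 * k + 1) • (f 0 + f 1) := by
  calc ∑ j ∈ Finset.range (2 ^ (2 * (k + 1))), f (blockB (k + 1) j)
      = ∑ j ∈ Finset.range (2 ^ (2 * (k + 1))), (if j % 2 = 0 then f 0 else f 1) :=
        Finset.sum_congr rfl fun j hj => by
          rw [blockB, if_pos (Finset.mem_range.1 hj)]
          exact apply_ite f _ _ _
    _ = 2 ^ (2 * k + 1) • (f 0 + f 1) := by
        rw [show 2 ^ (2 * (k + 1)) = 2 * 2 ^ (2 * k + 1) by ring, sum_range_two_mul_ite_even]

lemma sum_blockB :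
    ∑ j ∈ Finset.range (mlen (k + 1)), f (blockB (k + 1) j) =
      2 ^ (2 * k + 1) • (f 0 + f 1) + 2 ^ (2 * k + 2) • (f 0 + f 2) := by
  rw [mlen, Finset.sum_range_add, sum_blockB_first_half,
    show 2 ^ (2 * (k + 1) + 1) = 2 * 2 ^ (2 * k + 2) by ring,
    ← sum_range_two_mul_ite_even (f 0) (f 2)]
  congr 1
  refine Finset.sum_congr rfl fun j _ => ?_
  rw [blockB, if_neg (by omega), Nat.add_sub_cancel_left]
  exact apply_ite f _ _ _

end Blocks

lemma w_msum_add (k j : ℕ) : w (msum k + j) = wAux (k + 1) j := by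
  induction k generalizing j with
  | zero => simp [w, msum]
  | succ n ih =>
    rw [msum, Finset.sum_range_succ, ← msum, add_assoc, ih, wAux,
      dif_neg (by omega), Nat.add_sub_cancel_left]

lemma w_msum_add_of_lt {k j : ℕ} (hj : j < mlen (k + 1)) : w (msum k + j) = blockB (k + 1) j := by
  rw [w_msum_add, wAux, dif_pos hj]

lemma msum_add_four (k : ℕ) : msum k + 4 = 2 ^ (2 * (k + 1)) := by
  induction k with
  | zero => rfl
  | succ n ih =>
    rw [msum, Finset.sum_range_succ, ← msum, mlen]
    ring_nf at ih ⊢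
    omega

section Frequencies

variable {E : Type*} [AddCommGroup E] [Module ℝ E] (a : Fin 3 → E) (k : ℕ)

lemma sum_w_msum :
    ∑ i ∈ Finset.range (msum k), a (w i) =
      (msum k : ℝ) • ((1/2 : ℝ) • a 0 + (1/6 : ℝ) • a 1 + (1/3 : ℝ) • a 2) := by
  induction k with
  | zero => simp [msum]
  | succ n ih =>
    have hsum : msum (n + 1) = msum n + mlen (n + 1) := Finset.sum_range_succ _ _
    rw [hsum, Finset.sum_range_add, ih, Finset.sum_congr rfl fun i hi => by rw [w_msum_add_of_lt (Finset.mem_range.1 hi)],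
      sum_blockB, mlen]
    simp only [← Nat.cast_smul_eq_nsmul ℝ]
    push_cast
    module

lemma sum_w_nseq :
    ∑ i ∈ Finset.range (nseq (k + 1)), a (w i) =
      (msum k : ℝ) • ((1/2 : ℝ) • a 0 + (1/6 : ℝ) • a 1 + (1/3 : ℝ) • a 2) +
        (2 ^ (2 * k + 1) : ℝ) • (a 0 + a 1) := by
  have hlt : ∀ i ∈ Finset.range (2 ^ (2 * (k + 1))), i < mlen (k + 1) := fun i hi => by
    rw [Finset.mem_range] at hi; rw [mlen]; omega
  rw [nseq, Nat.add_sub_cancel, Finset.sum_range_add, sum_w_msum,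
    Finset.sum_congr rfl fun i hi => by rw [w_msum_add_of_lt (hlt i hi)],
    sum_blockB_first_half, ← Nat.cast_smul_eq_nsmul ℝ]
  push_cast
  rfl

lemma average_w_hatn :
    (hatn (k + 1) : ℝ)⁻¹ • ∑ i ∈ Finset.range (hatn (k + 1)), a (w i) =
      (1/2 : ℝ) • a 0 + (1/6 : ℝ) • a 1 + (1/3 : ℝ) • a 2 := by
  have hpos : msum (k + 1) ≠ 0 := by
    rw [msum, Finset.sum_range_succ, mlen]; positivity
  rw [hatn, sum_w_msum, inv_smul_smul₀ (Nat.cast_ne_zero.2 hpos)]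

lemma average_w_nseq_sub :
    (nseq (k + 1) : ℝ)⁻¹ • ∑ i ∈ Finset.range (nseq (k + 1)), a (w i) -
        ((1/2 : ℝ) • a 0 + (1/3 : ℝ) • a 1 + (1/6 : ℝ) • a 2) =
      (2 / (3 * nseq (k + 1) : ℝ)) • (a 1 - a 2) := by
  have hM : (msum k : ℝ) = 2 * 2 ^ (2 * k + 1) - 4 := by
    rw [eq_sub_iff_add_eq, ← pow_succ', show 2 * k + 1 + 1 = 2 * (k + 1) by ring]
    exact_mod_cast msum_add_four k
  have hn : (nseq (k + 1) : ℝ) = 4 * (2 ^ (2 * k + 1) - 1) := by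
    rw [nseq, Nat.add_sub_cancel]; push_cast; rw [hM]; ring
  have hc : (2 ^ (2 * k + 1) - 1 : ℝ) ≠ 0 :=
    sub_ne_zero.2 (one_lt_pow₀ one_lt_two (by omega)).ne'
  rw [sum_w_nseq, hn, hM]
  generalize (2 : ℝ) ^ (2 * k + 1) = c at hc ⊢
  match_scalars <;> field_simp <;> ring

end Frequencies

lemma tendsto_nseq_succ_atTop : Tendsto (fun k => nseq (k + 1)) atTop atTop :=
  tendsto_atTop_mono (fun k => show k ≤ nseq (k + 1) from Nat.lt_two_pow_self.le.trans
    ((Nat.pow_le_pow_right two_pos (by omega)).trans (Nat.le_add_left _ _))) tendsto_id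

section Limsup

variable {ι E : Type*} [SeminormedAddCommGroup E] {l : Filter ι} [l.NeBot] {u : ι → E} {t : E}
  {ε : ℝ} {c : ι → ℝ}

lemma limsup_norm_sub_le_of_le_add (hc : Tendsto c l (𝓝 0))
    (h : ∀ᶠ i in l, ‖u i - t‖ ≤ ε + c i) : limsup (fun i => ‖u i - t‖) l ≤ ε := by
  have hlim : Tendsto (fun i => ε + c i) l (𝓝 ε) := by simpa using tendsto_const_nhds.add hc
  calc limsup (fun i => ‖u i - t‖) l ≤ limsup (fun i => ε + c i) l :=
        limsup_le_limsup h (isBoundedUnder_of ⟨0, fun _ => norm_nonneg _⟩).isCoboundedUnder_le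
          hlim.isBoundedUnder_le
    _ = ε := hlim.limsup_eq

lemma norm_sub_le_of_mapClusterPt (hc : Tendsto c l (𝓝 0))
    (h : ∀ᶠ i in l, ‖u i - t‖ ≤ ε + c i) {b : E} (hb : MapClusterPt b l u) : ‖b - t‖ ≤ ε := by
  have hbdd : IsBoundedUnder (· ≤ ·) l (fun i => ‖u i - t‖) :=
    (tendsto_const_nhds.add hc).isBoundedUnder_le.mono_le h
  calc ‖b - t‖ ≤ limsup (fun i => ‖u i - t‖) l :=
        (hb.continuousAt_comp (continuous_id.sub continuous_const).norm.continuousAt).le_limsup hbdd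
    _ ≤ ε := limsup_norm_sub_le_of_le_add hc h

end Limsup

theorem limit_points_of_two_subsequences_general (N : ℕ)
    (a : Fin 3 → EuclideanSpace ℝ (Fin N)) (ε : ℝ)
    (φ : SymbSpace 3 → EuclideanSpace ℝ (Fin N))
    (hφ : ∀ η : SymbSpace 3, ‖φ η - a (η.1 0)‖ ≤ ε)
    (ξ : SymbSpace 3) (hξ : ∀ j : ℕ, ξ.1 (j : ℤ) = w j) :
    (Filter.limsup (fun k : ℕ =>
        ‖birk φ (nseq (k + 1)) ξ - ((1/2 : ℝ) • a 0 + (1/3 : ℝ) • a 1 + (1/6 : ℝ) • a 2)‖)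
      atTop ≤ ε) ∧
    (Filter.limsup (fun k : ℕ =>
        ‖birk φ (hatn (k + 1)) ξ - ((1/2 : ℝ) • a 0 + (1/6 : ℝ) • a 1 + (1/3 : ℝ) • a 2)‖)
      atTop ≤ ε) ∧
    (∀ b : EuclideanSpace ℝ (Fin N),
        MapClusterPt b atTop (fun k : ℕ => birk φ (nseq (k + 1)) ξ) →
        ‖b - ((1/2 : ℝ) • a 0 + (1/3 : ℝ) • a 1 + (1/6 : ℝ) • a 2)‖ ≤ ε) ∧
    (∀ b : EuclideanSpace ℝ (Fin N),
        MapClusterPt b atTop (fun k : ℕ => birk φ (hatn (k + 1)) ξ) →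
        ‖b - ((1/2 : ℝ) • a 0 + (1/6 : ℝ) • a 1 + (1/3 : ℝ) • a 2)‖ ≤ ε) := by
  set err : ℕ → ℝ := fun k => ‖(2 / (3 * nseq (k + 1) : ℝ)) • (a 1 - a 2)‖
  have herr : Tendsto err atTop (𝓝 0) := by
    have h := tendsto_const_nhds (x := (2 : ℝ)).div_atTop
      ((tendsto_natCast_atTop_atTop.comp tendsto_nseq_succ_atTop).const_mul_atTop three_pos)
    simpa using (h.smul_const (a 1 - a 2)).norm
  have hnseq : ∀ k, ‖birk φ (nseq (k + 1)) ξ -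
      ((1/2 : ℝ) • a 0 + (1/3 : ℝ) • a 1 + (1/6 : ℝ) • a 2)‖ ≤ ε + err k := fun k =>
    (norm_sub_le_norm_sub_add_norm_sub _ _ _).trans
      (add_le_add (norm_birk_sub_average_le hφ hξ _) (congrArg norm (average_w_nseq_sub a k)).le)
  have hhatn : ∀ k, ‖birk φ (hatn (k + 1)) ξ -
      ((1/2 : ℝ) • a 0 + (1/6 : ℝ) • a 1 + (1/3 : ℝ) • a 2)‖ ≤ ε + 0 := fun k => by
    simpa [average_w_hatn] using norm_birk_sub_average_le hφ hξ (hatn (k + 1))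
  exact ⟨limsup_norm_sub_le_of_le_add herr (.of_forall hnseq),
    limsup_norm_sub_le_of_le_add tendsto_const_nhds (.of_forall hhatn),
    fun _ => norm_sub_le_of_mapClusterPt herr (.of_forall hnseq),
    fun _ => norm_sub_le_of_mapClusterPt tendsto_const_nhds (.of_forall hhatn)⟩

/-- for `ξ ∈ Σ_3` agreeing with `w = B_1 B_2 B_3 ⋯` in nonnegative
coordinates, and `φ` with `‖φ(η) - a_{η_0}‖ ≤ ε`, the Birkhoff averages along `n_k`
(resp. `n̂_k`) eventually lie `ε`-close to `a_1/2 + a_2/3 + a_3/6` (resp.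
`a_1/2 + a_2/6 + a_3/3`); consequently all limit points of these subsequences satisfy
the same bounds.  (The index `k` runs over `k ≥ 1`, i.e. over `k + 1`, `k : ℕ`.) -/
theorem limit_points_of_two_subsequences (N : ℕ) (hN : 1 ≤ N)
    (a : Fin 3 → EuclideanSpace ℝ (Fin N)) (ε : ℝ) (hε : 0 < ε)
    (φ : SymbSpace 3 → EuclideanSpace ℝ (Fin N))
    (hφ : ∀ η : SymbSpace 3, ‖φ η - a (η.1 0)‖ ≤ ε)
    (ξ : SymbSpace 3) (hξ : ∀ j : ℕ, ξ.1 (j : ℤ) = w j) :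
    (Filter.limsup (fun k : ℕ =>
        ‖birk φ (nseq (k + 1)) ξ - ((1/2 : ℝ) • a 0 + (1/3 : ℝ) • a 1 + (1/6 : ℝ) • a 2)‖)
      atTop ≤ ε) ∧
    (Filter.limsup (fun k : ℕ =>
        ‖birk φ (hatn (k + 1)) ξ - ((1/2 : ℝ) • a 0 + (1/6 : ℝ) • a 1 + (1/3 : ℝ) • a 2)‖)
      atTop ≤ ε) ∧
    (∀ b : EuclideanSpace ℝ (Fin N),
        MapClusterPt b atTop (fun k : ℕ => birk φ (nseq (k + 1)) ξ) →
        ‖b - ((1/2 : ℝ) • a 0 + (1/3 : ℝ) • a 1 + (1/6 : ℝ) • a 2)‖ ≤ ε) ∧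
    (∀ b : EuclideanSpace ℝ (Fin N),
        MapClusterPt b atTop (fun k : ℕ => birk φ (hatn (k + 1)) ξ) →
        ‖b - ((1/2 : ℝ) • a 0 + (1/6 : ℝ) • a 1 + (1/3 : ℝ) • a 2)‖ ≤ ε) :=
  limit_points_of_two_subsequences_general N a ε φ hφ ξ hξ
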